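/- arXiv:1702.06096 — 4 statements merged into one kernel-verified Lean document; each statement's English description precedes it below -/
import Mathlib

section
/- Let C1 = 1 + 3·∑_{d≥1} (-1)^d·d·(3d-1)!/(d!)^3·q^d ∈ Q[[q]], X = (D C1)/C1 where D = q·d/dq, and let L ∈ Q[[q]] be the unique power series with constant term 1 and L^3·(1+27q) = 1. Then the identity X^2 − (L^3 − 1)·X + D X − (2/9)·(L^3 − 1) = 0 holds in Q[[q]]. -/
/-- The operator `D = q·d/dq` on formal power series. -/
noncomputable def qD (F : PowerSeries ℚ) : PowerSeries ℚ :=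
  PowerSeries.mk fun n => (n : ℚ) * PowerSeries.coeff n F

/-- `C1 = 1 + 3·∑_{d≥1} (-1)^d·d·(3d-1)!/(d!)^3·q^d`. -/
noncomputable def C1series : PowerSeries ℚ :=
  PowerSeries.mk fun d =>
    if d = 0 then 1
    else 3 * (-1) ^ d * d * (Nat.factorial (3 * d - 1) : ℚ) / ((Nat.factorial d : ℚ)) ^ 3

/-!
The coefficients of `C1` satisfy the hypergeometric recurrence
`(n+1)² c_{n+1} + 3(3n+1)(3n+2) c_n = 0`, i.e. `C1` solves the ODE
`(1 + 27q) D²C1 + q (27 D C1 + 6 C1) = 0`. Writing `D C1 = X C1`, hence `D²C1 = (DX + X²) C1`,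
and cancelling the unit `C1` gives the Riccati equation `(1 + 27q)(DX + X²) + 27qX + 6q = 0`.
Since `L³ - 1 = -27q / (1 + 27q)`, this is the claimed identity multiplied by the unit `1 + 27q`.
-/

open PowerSeries

@[simp]
lemma PowerSeries.coeff_ofNat_mul {R : Type*} [Semiring R] (k n : ℕ) [k.AtLeastTwo] (φ : R⟦X⟧) :
    coeff n (ofNat(k) * φ) = ofNat(k) * coeff n φ := by
  rw [← map_ofNat C, coeff_C_mul]

@[simp]
lemma coeff_qD (F : ℚ⟦X⟧) (n : ℕ) : coeff n (qD F) = n * coeff n F :=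
  coeff_mk _ _

@[simp]
lemma constantCoeff_qD (F : ℚ⟦X⟧) : constantCoeff (qD F) = 0 := by
  rw [← coeff_zero_eq_constantCoeff_apply, coeff_qD, Nat.cast_zero, zero_mul]

lemma qD_eq_X_mul_derivative (F : ℚ⟦X⟧) : qD F = X * derivative ℚ F := by
  ext (_ | n)
  · simp
  · rw [coeff_qD, coeff_succ_X_mul, coeff_derivative]
    push_cast
    ring

lemma qD_mul (F G : ℚ⟦X⟧) : qD (F * G) = qD F * G + F * qD G := by
  simp only [qD_eq_X_mul_derivative, Derivation.leibniz, smul_eq_mul]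
  ring

lemma qD_qD_of_mul_eq_qD {F Y : ℚ⟦X⟧} (h : Y * F = qD F) :
    qD (qD F) = (qD Y + Y ^ 2) * F := by
  rw [← h, qD_mul, ← h]
  ring

lemma constantCoeff_C1series : constantCoeff C1series = 1 := by
  simp [C1series]

lemma C1series_coeff_recurrence (n : ℕ) :
    (n + 1) ^ 2 * coeff (n + 1) C1series + 3 * (3 * n + 1) * (3 * n + 2) * coeff n C1series = 0 := by
  rcases n with _ | m
  · norm_num [C1series, Nat.factorial]
  · have h₁ : 3 * (m + 1 + 1) - 1 = 3 * m + 2 + 1 + 1 + 1 := by omega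
    have h₂ : 3 * (m + 1) - 1 = 3 * m + 2 := by omega
    simp only [C1series, coeff_mk, Nat.succ_ne_zero, if_false, h₁, h₂, Nat.factorial_succ]
    push_cast
    field_simp
    ring

lemma C1series_ode :
    (1 + 27 * X) * qD (qD C1series) + X * (27 * qD C1series + 6 * C1series) = 0 := by
  ext (_ | n)
  · simp
  · simp [add_mul, mul_assoc, mul_left_comm _ X, coeff_succ_X_mul]
    linear_combination C1series_coeff_recurrence n

lemma isUnit_C1series : IsUnit C1series :=
  isUnit_iff_constantCoeff.mpr (constantCoeff_C1series ▸ isUnit_one)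

lemma riccati_of_mul_C1series_eq_qD {Y : ℚ⟦X⟧} (hY : Y * C1series = qD C1series) :
    (1 + 27 * X) * (qD Y + Y ^ 2) + X * (27 * Y + 6) = 0 := by
  refine isUnit_C1series.mul_left_eq_zero.mp ?_
  calc ((1 + 27 * X) * (qD Y + Y ^ 2) + X * (27 * Y + 6)) * C1series
      = (1 + 27 * X) * qD (qD C1series) + X * (27 * qD C1series + 6 * C1series) := by
        rw [qD_qD_of_mul_eq_qD hY, ← hY]
        ring
    _ = 0 := C1series_ode

theorem stmt_0_general (L X : PowerSeries ℚ)
    (hL : L ^ 3 * (1 + 27 * PowerSeries.X) = 1)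
    (hX : X * C1series = qD C1series) :
    X ^ 2 - (L ^ 3 - 1) * X + qD X - (2 / 9 : ℚ) • (L ^ 3 - 1) = 0 := by
  refine (IsUnit.of_mul_eq_one_right _ hL).mul_left_eq_zero.mp ?_
  have h27 : C (2 / 9 : ℚ) * 27 = 6 := by
    rw [← map_ofNat C 27, ← map_mul, ← map_ofNat C 6]
    norm_num
  rw [smul_eq_C_mul]
  linear_combination riccati_of_mul_C1series_eq_qD hX - (X + C (2 / 9 : ℚ)) * hL + PowerSeries.X * h27

/-- The identity `X² − (L³−1)X + DX − (2/9)(L³−1) = 0` in `ℚ[[q]]`, where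
`X = (D C1)/C1` and `L` is the unique power series with constant term `1`
satisfying `L³(1+27q) = 1`. -/
theorem stmt_0 (L X : PowerSeries ℚ)
    (hL0 : PowerSeries.constantCoeff L = 1)
    (hL : L ^ 3 * (1 + 27 * PowerSeries.X) = 1)
    (hX : X * C1series = qD C1series) :
    X ^ 2 - (L ^ 3 - 1) * X + qD X - (2 / 9 : ℚ) • (L ^ 3 - 1) = 0 :=
  stmt_0_general L X hL hX
end

section
/- For each i ∈ {0,1,2}, the restricted small I-function Ī_i ∈ C(z)[[q]] satisfies the Picard–Fuchs equation ( M_i^3 − 1 + 3q·M_i·(3M_i + z)·(3M_i + 2z) ) Ī_i = 0, where M_i is the operator on C(z)[[q]] sending F to ζ^i·F + z·(q·dF/dq), and the operator products denote composition (the final multiplication by 3q is applied after the composite operator M_i(3M_i+z)(3M_i+2z)). -/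
/-- The operator `D = q·d/dq` on power series with coefficients in `ℂ(z)`. -/
noncomputable def qDK (F : PowerSeries (RatFunc ℂ)) : PowerSeries (RatFunc ℂ) :=
  PowerSeries.mk fun n => (n : RatFunc ℂ) * PowerSeries.coeff n F

/-- The restricted small I-function `Ī_i` of local `ℙ²` at the fixed point `p_i`,
with specialization `λ_j = ζ^j`:
`Ī_i = ∑_d q^d ∏_{k=0}^{3d-1}(-3ζ^i − kz) / ∏_{j=0}^{2}∏_{k=1}^{d}(ζ^i − ζ^j + kz)`. -/
noncomputable def Ibar (ζ : ℂ) (i : ℕ) : PowerSeries (RatFunc ℂ) :=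
  PowerSeries.mk fun d =>
    (∏ k ∈ Finset.range (3 * d),
        (RatFunc.C (-3 * ζ ^ i) - (k : RatFunc ℂ) * RatFunc.X)) /
    (∏ j ∈ Finset.range 3, ∏ k ∈ Finset.range d,
        (RatFunc.C (ζ ^ i - ζ ^ j) + ((k : RatFunc ℂ) + 1) * RatFunc.X))

/-- The operator `M_i : F ↦ ζ^i·F + z·(q·dF/dq)` on `ℂ(z)[[q]]`. -/
noncomputable def Mop (c : ℂ) (F : PowerSeries (RatFunc ℂ)) : PowerSeries (RatFunc ℂ) :=
  PowerSeries.C (RatFunc.C c) * F + PowerSeries.C RatFunc.X * qDK F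

/-- The operator `3M + z`. -/
noncomputable def M3z (c : ℂ) (F : PowerSeries (RatFunc ℂ)) : PowerSeries (RatFunc ℂ) :=
  3 • Mop c F + PowerSeries.C RatFunc.X * F

/-- The operator `3M + 2z`. -/
noncomputable def M3z2 (c : ℂ) (F : PowerSeries (RatFunc ℂ)) : PowerSeries (RatFunc ℂ) :=
  3 • Mop c F + 2 • (PowerSeries.C RatFunc.X * F)

/-! The operators `M_i`, `3M_i + z`, `3M_i + 2z` act diagonally on `q^d`, `M_i` with eigenvalue
`ζ^i + d z`. Coefficientwise the equation therefore says `(ζ^i)^3 = 1` in degree `0`, and in degree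
`d + 1` it is the one-step recurrence of the coefficients of `Ī_i`: their denominators gain the
factor `∏_j (ζ^i − ζ^j + (d+1) z) = (ζ^i + (d+1) z)^3 − 1`, since the `ζ^j` are the three cube
roots of unity, and their numerators gain `∏_{k=3d}^{3d+2} (−3ζ^i − k z)`. -/

open PowerSeries

noncomputable def picardFuchs (c : ℂ) (F : PowerSeries (RatFunc ℂ)) : PowerSeries (RatFunc ℂ) :=
  Mop c (Mop c (Mop c F)) - F + (3 * X) * Mop c (M3z c (M3z2 c F))

lemma coeff_Mop (c : ℂ) (F : PowerSeries (RatFunc ℂ)) (n : ℕ) :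
    coeff n (Mop c F) = (RatFunc.C c + (n : RatFunc ℂ) * RatFunc.X) * coeff n F := by
  simp only [Mop, qDK, map_add, coeff_C_mul, coeff_mk]
  ring

lemma coeff_M3z (c : ℂ) (F : PowerSeries (RatFunc ℂ)) (n : ℕ) :
    coeff n (M3z c F) =
      (3 * (RatFunc.C c + (n : RatFunc ℂ) * RatFunc.X) + RatFunc.X) * coeff n F := by
  rw [M3z, map_add, map_nsmul, coeff_Mop, coeff_C_mul, nsmul_eq_mul]
  push_cast
  ring

lemma coeff_M3z2 (c : ℂ) (F : PowerSeries (RatFunc ℂ)) (n : ℕ) :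
    coeff n (M3z2 c F) =
      (3 * (RatFunc.C c + (n : RatFunc ℂ) * RatFunc.X) + 2 * RatFunc.X) * coeff n F := by
  rw [M3z2, map_add, map_nsmul, map_nsmul, coeff_Mop, coeff_C_mul, nsmul_eq_mul, nsmul_eq_mul]
  push_cast
  ring

lemma coeff_zero_picardFuchs (c : ℂ) (F : PowerSeries (RatFunc ℂ)) :
    coeff 0 (picardFuchs c F) = (RatFunc.C c ^ 3 - 1) * coeff 0 F := by
  have hX : coeff 0 ((3 * X) * Mop c (M3z c (M3z2 c F))) = 0 := by simp
  rw [picardFuchs, map_add, map_sub, hX, coeff_Mop, coeff_Mop, coeff_Mop, Nat.cast_zero]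
  ring

lemma coeff_succ_picardFuchs (c : ℂ) (F : PowerSeries (RatFunc ℂ)) (n : ℕ) :
    coeff (n + 1) (picardFuchs c F) =
      ((RatFunc.C c + ((n : RatFunc ℂ) + 1) * RatFunc.X) ^ 3 - 1) * coeff (n + 1) F +
        3 * (RatFunc.C c + (n : RatFunc ℂ) * RatFunc.X) *
          (3 * (RatFunc.C c + (n : RatFunc ℂ) * RatFunc.X) + RatFunc.X) *
          (3 * (RatFunc.C c + (n : RatFunc ℂ) * RatFunc.X) + 2 * RatFunc.X) * coeff n F := by
  rw [picardFuchs, mul_comm 3 X, mul_assoc, map_add, map_sub, coeff_succ_X_mul,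
    ← map_ofNat C 3, coeff_C_mul, coeff_Mop, coeff_Mop, coeff_Mop, coeff_Mop, coeff_M3z,
    coeff_M3z2]
  push_cast
  ring

lemma IsPrimitiveRoot.prod_range_three_sub_pow {R : Type*} [CommRing R] [IsDomain R] {ω : R}
    (hω : IsPrimitiveRoot ω 3) (x : R) : ∏ j ∈ Finset.range 3, (x - ω ^ j) = x ^ 3 - 1 := by
  have hsum : ∑ j ∈ Finset.range 3, ω ^ j = 0 := hω.geom_sum_eq_zero (by norm_num)
  simp only [Finset.prod_range_succ, Finset.sum_range_succ, Finset.prod_range_zero,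
    Finset.sum_range_zero] at hsum ⊢
  linear_combination (ω * x - x ^ 2) * hsum - hω.pow_eq_one

lemma RatFunc.C_add_C_mul_X_ne_zero {K : Type*} [Field K] (a : K) {b : K} (hb : b ≠ 0) :
    RatFunc.C a + RatFunc.C b * RatFunc.X ≠ 0 := by
  rw [← RatFunc.algebraMap_C, ← RatFunc.algebraMap_C, ← RatFunc.algebraMap_X, ← map_mul,
    ← map_add, Ne, map_eq_zero_iff _ (RatFunc.algebraMap_injective K)]
  intro h
  exact hb (by simpa using congrArg (Polynomial.coeff · 1) h)

lemma coeff_Ibar_succ (ζ : ℂ) (hζ : IsPrimitiveRoot ζ 3) (i n : ℕ) :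
    ((RatFunc.C (ζ ^ i) + ((n : RatFunc ℂ) + 1) * RatFunc.X) ^ 3 - 1) * coeff (n + 1) (Ibar ζ i) =
      -(3 * (RatFunc.C (ζ ^ i) + (n : RatFunc ℂ) * RatFunc.X) *
          (3 * (RatFunc.C (ζ ^ i) + (n : RatFunc ℂ) * RatFunc.X) + RatFunc.X) *
          (3 * (RatFunc.C (ζ ^ i) + (n : RatFunc ℂ) * RatFunc.X) + 2 * RatFunc.X)) *
        coeff n (Ibar ζ i) := by
  set x := RatFunc.C (ζ ^ i) + ((n : RatFunc ℂ) + 1) * RatFunc.X with hx_def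
  have hfactor (a : ℂ) (k : ℕ) : RatFunc.C a + ((k : RatFunc ℂ) + 1) * RatFunc.X ≠ 0 := by
    simpa using RatFunc.C_add_C_mul_X_ne_zero a (Nat.cast_add_one_ne_zero k : (k : ℂ) + 1 ≠ 0)
  have hroots : ∏ j ∈ Finset.range 3,
      (RatFunc.C (ζ ^ i - ζ ^ j) + ((n : RatFunc ℂ) + 1) * RatFunc.X) = x ^ 3 - 1 := by
    rw [← (hζ.map_of_injective RatFunc.C_injective).prod_range_three_sub_pow x]
    refine Finset.prod_congr rfl fun j _ => ?_
    simp only [hx_def, map_sub, map_pow]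
    ring
  have hx : x ^ 3 - 1 ≠ 0 :=
    hroots ▸ Finset.prod_ne_zero_iff.2 fun j _ => hfactor _ _
  have hden : ∏ j ∈ Finset.range 3, ∏ k ∈ Finset.range n,
      (RatFunc.C (ζ ^ i - ζ ^ j) + ((k : RatFunc ℂ) + 1) * RatFunc.X) ≠ 0 :=
    Finset.prod_ne_zero_iff.2 fun j _ => Finset.prod_ne_zero_iff.2 fun k _ => hfactor _ _
  rw [Ibar, coeff_mk, coeff_mk,
    Finset.prod_congr rfl fun j _ => Finset.prod_range_succ _ n, Finset.prod_mul_distrib, hroots,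
    show 3 * (n + 1) = 3 * n + 1 + 1 + 1 by ring, Finset.prod_range_succ, Finset.prod_range_succ,
    Finset.prod_range_succ]
  set N := ∏ k ∈ Finset.range (3 * n), (RatFunc.C (-3 * ζ ^ i) - (k : RatFunc ℂ) * RatFunc.X)
  set D := ∏ j ∈ Finset.range 3, ∏ k ∈ Finset.range n,
    (RatFunc.C (ζ ^ i - ζ ^ j) + ((k : RatFunc ℂ) + 1) * RatFunc.X)
  simp only [Nat.cast_add, Nat.cast_mul, Nat.cast_ofNat, Nat.cast_one, map_neg, map_mul, map_ofNat]
  field_simp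
  ring

theorem stmt_2_general (ζ : ℂ) (hζ : IsPrimitiveRoot ζ 3) (i : ℕ) :
    Mop (ζ ^ i) (Mop (ζ ^ i) (Mop (ζ ^ i) (Ibar ζ i))) - Ibar ζ i
      + (3 * PowerSeries.X) * Mop (ζ ^ i) (M3z (ζ ^ i) (M3z2 (ζ ^ i) (Ibar ζ i))) = 0 := by
  change picardFuchs (ζ ^ i) (Ibar ζ i) = 0
  ext (_ | n)
  · have hc : RatFunc.C (ζ ^ i) ^ 3 = 1 := by
      rw [← map_pow, ← pow_mul, mul_comm, pow_mul, hζ.pow_eq_one, one_pow, map_one]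
    rw [coeff_zero_picardFuchs, hc, sub_self, zero_mul, map_zero]
  · rw [coeff_succ_picardFuchs, coeff_Ibar_succ ζ hζ, map_zero]
    ring

/-- The Picard–Fuchs equation
`(M_i³ − 1 + 3q·M_i(3M_i+z)(3M_i+2z)) Ī_i = 0` for the restricted small
I-functions of local `ℙ²` at each fixed point `p_i`, `i ∈ {0,1,2}`. -/
theorem stmt_2 (ζ : ℂ) (hζ : IsPrimitiveRoot ζ 3) (i : ℕ) (hi : i < 3) :
    Mop (ζ ^ i) (Mop (ζ ^ i) (Mop (ζ ^ i) (Ibar ζ i))) - Ibar ζ i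
      + (3 * PowerSeries.X) * Mop (ζ ^ i) (M3z (ζ ^ i) (M3z2 (ζ ^ i) (Ibar ζ i))) = 0 :=
  stmt_2_general ζ hζ i
end

section
/- After setting t_0 = 0, the following evaluations of genus 0 correlators hold in C[[t_1, t_2, …]], where 1/(1−t_1) denotes the geometric series ∑_{m≥0} t_1^m: ⟨⟨1,1,1⟩⟩_{0,3}|_{t_0=0} = 1/(1−t_1); ⟨⟨1,1,1,1⟩⟩_{0,4}|_{t_0=0} = t_2/(1−t_1)^3; ⟨⟨1,1,1,1,1⟩⟩_{0,5}|_{t_0=0} = t_3/(1−t_1)^4 + 3 t_2^2/(1−t_1)^5; ⟨⟨1,1,1,1,1,1⟩⟩_{0,6}|_{t_0=0} = t_4/(1−t_1)^5 + 10 t_2 t_3/(1−t_1)^6 + 15 t_2^3/(1−t_1)^7. -/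
/-- Genus 0 ψ-class intersection numbers:
`⟨τ_{a_1}⋯τ_{a_n}⟩_0 = (n−3)!/(a_1!⋯a_n!)` if `a_1+⋯+a_n = n−3` (and `n ≥ 3`),
and `0` otherwise. -/
noncomputable def tauInt (a : Multiset ℕ) : ℂ :=
  if a.sum + 3 = Multiset.card a then
    (Nat.factorial (Multiset.card a - 3) : ℂ) /
      ((a.map fun i => (Nat.factorial i : ℂ)).prod)
  else 0

/-- The genus 0 correlator `⟨⟨ψ^{a_1},…,ψ^{a_n}⟩⟩_{0,n}` as an element of
`ℂ[[t_0,t_1,t_2,…]]`: its coefficient at the monomial `∏ t_i^{m i}` equals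
`⟨τ_{a_1}⋯τ_{a_n}∏τ_{b_j}⟩_0 / ∏_i (m i)!`, where the `b_j` run over the
multiset associated to `m`; this is the coefficient form of
`∑_k (1/k!) ∑_{b_1,…,b_k} ⟨τ_{a_1}⋯τ_{a_n}τ_{b_1}⋯τ_{b_k}⟩_0 t_{b_1}⋯t_{b_k}`. -/
noncomputable def corr (a : Multiset ℕ) : MvPowerSeries ℕ ℂ :=
  fun m => tauInt (a + Finsupp.toMultiset m) / (m.prod fun _ e => (Nat.factorial e : ℂ))

/-- Restriction `t_0 = 0` of a power series in `t_0, t_1, t_2, …`. -/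
noncomputable def setT0 (F : MvPowerSeries ℕ ℂ) : MvPowerSeries ℕ ℂ :=
  fun m => if m 0 = 0 then F m else 0

/-- The geometric series `1/(1−t_1) = ∑_{m≥0} t_1^m`. -/
noncomputable def geom : MvPowerSeries ℕ ℂ :=
  fun m => if m.support ⊆ {1} then 1 else 0

/-!
After `t_0 = 0`, the coefficient of `t^m` in `⟨⟨1,…,1⟩⟩_{0,n}` is an intersection number on
`M̄_{0,n+|m|}` whose dimension constraint reads `∑ (i - 1) m_i = n - 3`; it equals
`(∑ i m_i)! / ∏ (i!)^{m_i} m_i!`. Splitting off the exponent `k` of `t_1`, which does not enter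
the constraint, this is `w! / ∏_{i ≥ 2} (i!)^{r_i} r_i!` times `binom(w + k, k)` with
`w = ∑ i r_i` for the remaining exponents `r`, and `binom(w + k, k)` is the coefficient of `t_1^k`
in `1/(1 - t_1)^{w+1}`. Hence the correlator is a finite sum over the admissible `r`, and for
`n ≤ 6` these are the monomials `t_2^a t_3^b t_4^c` with `a + 2b + 3c = n - 3`.
-/

open Finsupp MvPowerSeries
open scoped Nat

theorem PowerSeries.coeff_toMvPowerSeries {R σ : Type*} [CommSemiring R] [DecidableEq σ]
    (f : PowerSeries R) (i : σ) (m : σ →₀ ℕ) :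
    MvPowerSeries.coeff m (f.toMvPowerSeries i) =
      if m = single i (m i) then PowerSeries.coeff (m i) f else 0 := by
  split_ifs with h
  · have hm : m = embDomain (Function.Embedding.punit i) (single () (m i)) := by
      rw [embDomain_single]; exact h
    nth_rw 1 [hm]
    exact coeff_embDomain_rename (Function.Embedding.punit i) f _
  · apply coeff_rename_eq_zero
    rintro ⟨y, rfl⟩
    rw [unique_single y, mapDomain_single] at h
    simp at h

theorem Finsupp.le_and_tsub_eq_single_iff {σ : Type*} [DecidableEq σ] {i : σ}
    {r m : σ →₀ ℕ} (hr : r i = 0) : r ≤ m ∧ m - r = single i (m i) ↔ m.erase i = r := by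
  simp only [Finsupp.le_def, Finsupp.ext_iff, tsub_apply, erase_apply, ← forall_and]
  refine forall_congr' fun j => ?_
  by_cases hj : j = i
  · subst hj; simp [hr]
  · simp [hj]; omega

theorem MvPowerSeries.coeff_monomial_mul_toMvPowerSeries {R σ : Type*} [CommSemiring R]
    [DecidableEq σ] {i : σ} {r : σ →₀ ℕ} (hr : r i = 0) (c : R) (f : PowerSeries R)
    (m : σ →₀ ℕ) :
    coeff m (monomial r c * f.toMvPowerSeries i) =
      if m.erase i = r then c * PowerSeries.coeff (m i) f else 0 := by
  rw [coeff_monomial_mul, PowerSeries.coeff_toMvPowerSeries]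
  by_cases hle : r ≤ m
  · have key : m - r = single i (m i) ↔ m.erase i = r := by
      simpa [hle] using le_and_tsub_eq_single_iff (m := m) hr
    simp [hle, hr, key]
  · have hne : m.erase i ≠ r := fun h => hle ((le_and_tsub_eq_single_iff hr).2 h).1
    simp [hle, hne]

theorem Finsupp.erase_single_add {σ M : Type*} [AddZeroClass M] {i : σ} {r : σ →₀ M}
    (hr : r i = 0) (k : M) : (single i k + r).erase i = r := by
  rw [erase_add, erase_single, zero_add, erase_of_notMem_support (by simpa)]

theorem geom_eq : geom = (PowerSeries.mk 1).toMvPowerSeries 1 := by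
  ext m
  rw [PowerSeries.coeff_toMvPowerSeries, PowerSeries.coeff_mk, Pi.one_apply]
  exact if_congr support_subset_singleton rfl rfl

theorem geom_pow_succ (p : ℕ) :
    geom ^ (p + 1) = (PowerSeries.mk fun k => ((p + k).choose p : ℂ)).toMvPowerSeries 1 := by
  rw [geom_eq, ← map_pow, PowerSeries.mk_one_pow_eq_mk_choose_add]

noncomputable def corrDenom (m : ℕ →₀ ℕ) : ℂ := m.prod fun i k => (i ! : ℂ) ^ k * k !

theorem corrDenom_ne_zero (m : ℕ →₀ ℕ) : corrDenom m ≠ 0 :=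
  Finset.prod_ne_zero_iff.2 fun _ _ =>
    mul_ne_zero (pow_ne_zero _ (Nat.cast_ne_zero.2 (Nat.factorial_ne_zero _)))
      (Nat.cast_ne_zero.2 (Nat.factorial_ne_zero _))

theorem corrDenom_single_add {r : ℕ →₀ ℕ} {i : ℕ} (hr : r i = 0) (k : ℕ) :
    corrDenom (single i k + r) = (i ! : ℂ) ^ k * k ! * corrDenom r := by
  rw [corrDenom, ← mul_prod_erase' _ i _ (by simp), erase_single_add hr]
  simp [hr, corrDenom]

theorem coeff_setT0_corr_replicate (n : ℕ) (m : ℕ →₀ ℕ) :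
    coeff m (setT0 (corr (Multiset.replicate n 0))) =
      if m 0 = 0 ∧ weight id m + 3 = n + degree m then ((weight id m)! : ℂ) / corrDenom m
      else 0 := by
  have hcard : Multiset.card (Multiset.replicate n 0 + toMultiset m) = n + degree m := by
    simp [degree_apply, Finsupp.sum]
  have hsum : (Multiset.replicate n 0 + toMultiset m).sum = weight id m := by
    simp [weight_apply]
  have hprod : ((Multiset.replicate n 0 + toMultiset m).map fun i => (i ! : ℂ)).prod =
      m.prod fun i k => (i ! : ℂ) ^ k := by
    simp [Finset.prod_multiset_map_count, Finsupp.prod]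
  simp only [coeff_apply, setT0, corr, tauInt, hcard, hsum, hprod]
  by_cases h0 : m 0 = 0
  · by_cases hdim : weight id m + 3 = n + degree m
    · rw [if_pos h0, if_pos hdim, if_pos ⟨h0, hdim⟩, corrDenom, prod_mul, div_div,
        show n + degree m - 3 = weight id m by omega]
    · rw [if_pos h0, if_neg hdim, if_neg (fun h => hdim h.2), zero_div]
  · rw [if_neg h0, if_neg (fun h => h0 h.1)]

/-- `r` is the exponent vector of the insertions `t_2, t_3, …` in a nonzero coefficient of
`⟨⟨1,…,1⟩⟩_{0,n}|_{t_0=0}`, the exponent of `t_1` being split off. -/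
def IsAdmissible (n : ℕ) (r : ℕ →₀ ℕ) : Prop :=
  r 0 = 0 ∧ r 1 = 0 ∧ weight id r + 3 = n + degree r

theorem setT0_corr_replicate_eq_sum {n : ℕ} {S : Finset (ℕ →₀ ℕ)}
    (hS : ∀ r, r ∈ S ↔ IsAdmissible n r) :
    setT0 (corr (Multiset.replicate n 0)) =
      ∑ r ∈ S, monomial r ((weight id r)! / corrDenom r) * geom ^ (weight id r + 1) := by
  ext m
  obtain ⟨k, r, hr, rfl⟩ : ∃ k r, r 1 = 0 ∧ m = single 1 k + r :=
    ⟨m 1, m.erase 1, by simp, (single_add_erase 1 m).symm⟩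
  have hterm : ∀ s ∈ S, coeff (single 1 k + r)
      (monomial s ((weight id s)! / corrDenom s) * geom ^ (weight id s + 1)) =
      if r = s then (weight id s)! / corrDenom s * ((weight id s + k).choose (weight id s))
      else 0 := by
    intro s hs
    rw [geom_pow_succ, coeff_monomial_mul_toMvPowerSeries ((hS s).1 hs).2.1, erase_single_add hr]
    simp [hr]
  have hweight : weight id (single 1 k + r) = k + weight id r := by simp [weight_single]
  have hdegree : degree (single 1 k + r) = k + degree r := by simp [degree_single]
  have hzero : (single 1 k + r : ℕ →₀ ℕ) 0 = r 0 := by simp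
  rw [map_sum, Finset.sum_congr rfl hterm, Finset.sum_ite_eq, coeff_setT0_corr_replicate,
    hweight, hdegree, hzero]
  by_cases hadm : IsAdmissible n r
  · obtain ⟨hr0, -, hdim⟩ := hadm
    rw [if_pos ((hS r).2 ⟨hr0, hr, hdim⟩), if_pos ⟨hr0, by omega⟩, corrDenom_single_add hr,
      Nat.cast_add_choose, add_comm k, Nat.factorial_one, Nat.cast_one, one_pow, one_mul]
    have := corrDenom_ne_zero r
    have : ((weight id r)! : ℂ) ≠ 0 := Nat.cast_ne_zero.2 (Nat.factorial_ne_zero _)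
    have : (k ! : ℂ) ≠ 0 := Nat.cast_ne_zero.2 (Nat.factorial_ne_zero _)
    field_simp
  · rw [if_neg ((hS r).not.2 hadm), if_neg]
    rintro ⟨hr0, hdim⟩
    exact hadm ⟨hr0, hr, by omega⟩

theorem weight_id_eq_weight_pred_add_degree {r : ℕ →₀ ℕ} (hr : r 0 = 0) :
    weight id r = weight (· - 1) r + degree r := by
  rw [weight_apply, weight_apply, degree_apply, Finsupp.sum, Finsupp.sum,
    ← Finset.sum_add_distrib]
  refine Finset.sum_congr rfl fun i hi => ?_
  obtain ⟨j, rfl⟩ : ∃ j, i = j + 1 :=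
    Nat.exists_eq_succ_of_ne_zero (by rintro rfl; simp [hr] at hi)
  simp [mul_add]

noncomputable def shape (a b c : ℕ) : ℕ →₀ ℕ := single 2 a + single 3 b + single 4 c

theorem shape_injective : Function.Injective fun x : ℕ × ℕ × ℕ => shape x.1 x.2.1 x.2.2 := by
  rintro ⟨a, b, c⟩ ⟨a', b', c'⟩ h
  have h2 := DFunLike.congr_fun h 2
  have h3 := DFunLike.congr_fun h 3
  have h4 := DFunLike.congr_fun h 4
  simp only [shape, coe_add, Pi.add_apply, single_apply] at h2 h3 h4
  simp_all

theorem isAdmissible_iff_exists_shape {n : ℕ} (hn : n ≤ 6) {r : ℕ →₀ ℕ} :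
    IsAdmissible n r ↔ ∃ a b c, r = shape a b c ∧ a + 2 * b + 3 * c + 3 = n := by
  constructor
  · rintro ⟨hr0, hr1, hdim⟩
    rw [weight_id_eq_weight_pred_add_degree hr0] at hdim
    have hvanish : ∀ i, 5 ≤ i → r i = 0 := fun i hi => by
      by_contra h
      have := le_weight_of_ne_zero' (fun i => i - 1) h
      omega
    have hr : r = shape (r 2) (r 3) (r 4) := by
      ext i
      obtain rfl | rfl | rfl | rfl | rfl | hi : i = 0 ∨ i = 1 ∨ i = 2 ∨ i = 3 ∨ i = 4 ∨ 5 ≤ i := by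
        omega
      all_goals simp_all [shape, single_apply]
    refine ⟨r 2, r 3, r 4, hr, ?_⟩
    rw [hr] at hdim
    simp [shape, weight_single] at hdim
    omega
  · rintro ⟨a, b, c, rfl, h⟩
    simp [IsAdmissible, shape, weight_single, degree_single]
    omega

theorem corrDenom_shape (a b c : ℕ) :
    corrDenom (shape a b c) = 2 ^ a * a ! * (6 ^ b * b !) * (24 ^ c * c !) := by
  rw [shape, add_assoc, corrDenom_single_add (by simp), corrDenom_single_add (by simp),
    corrDenom, prod_single_index (by simp)]
  norm_num [Nat.factorial]
  ring

theorem weight_shape (a b c : ℕ) : weight id (shape a b c) = 2 * a + 3 * b + 4 * c := by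
  simp [shape, weight_single, mul_comm]

theorem monomial_shape (a b c : ℕ) (x : ℂ) :
    monomial (shape a b c) x = C x * X 2 ^ a * X 3 ^ b * X 4 ^ c := by
  simp only [X_pow_eq, ← monomial_zero_eq_C_apply, monomial_mul_monomial, zero_add, mul_one,
    shape]

theorem setT0_corr_replicate_eq_sum_shape {n : ℕ} (hn : n ≤ 6) {T : Finset (ℕ × ℕ × ℕ)}
    (hT : ∀ a b c, (a, b, c) ∈ T ↔ a + 2 * b + 3 * c + 3 = n) :
    setT0 (corr (Multiset.replicate n 0)) = ∑ x ∈ T,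
      C (((2 * x.1 + 3 * x.2.1 + 4 * x.2.2)! : ℂ) /
          (2 ^ x.1 * x.1 ! * (6 ^ x.2.1 * x.2.1 !) * (24 ^ x.2.2 * x.2.2 !))) *
        X 2 ^ x.1 * X 3 ^ x.2.1 * X 4 ^ x.2.2 * geom ^ (2 * x.1 + 3 * x.2.1 + 4 * x.2.2 + 1) := by
  rw [setT0_corr_replicate_eq_sum (S := T.image fun x => shape x.1 x.2.1 x.2.2),
    Finset.sum_image fun x _ y _ h => shape_injective h]
  · simp only [weight_shape, corrDenom_shape, monomial_shape]
  · intro r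
    simp only [isAdmissible_iff_exists_shape hn, Finset.mem_image, Prod.exists, hT]
    exact exists₃_congr fun a b c => and_comm.trans (and_congr_left' eq_comm)

/-- Evaluations of genus 0 correlators after setting `t_0 = 0`. -/
theorem stmt_10 :
    setT0 (corr (Multiset.replicate 3 0)) = geom ∧
    setT0 (corr (Multiset.replicate 4 0)) = MvPowerSeries.X 2 * geom ^ 3 ∧
    setT0 (corr (Multiset.replicate 5 0)) =
      MvPowerSeries.X 3 * geom ^ 4 + 3 * MvPowerSeries.X 2 ^ 2 * geom ^ 5 ∧
    setT0 (corr (Multiset.replicate 6 0)) =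
      MvPowerSeries.X 4 * geom ^ 5
        + 10 * MvPowerSeries.X 2 * MvPowerSeries.X 3 * geom ^ 6
        + 15 * MvPowerSeries.X 2 ^ 3 * geom ^ 7 := by
  refine ⟨?_, ?_, ?_, ?_⟩
  · rw [setT0_corr_replicate_eq_sum_shape (T := {(0, 0, 0)}) (by norm_num) (by simp; omega)]
    norm_num
  · rw [setT0_corr_replicate_eq_sum_shape (T := {(1, 0, 0)}) (by norm_num) (by simp; omega)]
    norm_num
  · rw [setT0_corr_replicate_eq_sum_shape (T := {(0, 1, 0), (2, 0, 0)}) (by norm_num)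
      (by simp; omega)]
    norm_num [Nat.factorial, map_ofNat]
  · rw [setT0_corr_replicate_eq_sum_shape (T := {(0, 0, 1), (1, 1, 0), (3, 0, 0)})
      (by norm_num) (by simp; omega)]
    norm_num [Nat.factorial, map_ofNat, add_assoc]
end

section
/- The set of genus 0 correlators { F_n := ⟨⟨1,…,1⟩⟩_{0,n}|_{t_0=0} }_{n≥4} freely generates the ring C(t_1)[t_2,t_3,…] over C(t_1): the C(t_1)-algebra homomorphism from the polynomial ring C(t_1)[Y_4, Y_5, Y_6, …] (one variable Y_n for each n ≥ 4) to C(t_1)[t_2,t_3,…] determined by Y_n ↦ F_n is an isomorphism. -/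
/-!
Counting ψ-degrees, the coefficient of `t_1^a ∏ t_i^{ν_i}` (`i ≥ 2`) in `F_n` vanishes unless
`∑ (i - 1) ν_i = n - 3`, and then equals `c_ν * binom(D + a, D)` with `D = ∑ i ν_i`.
Summing over `a`, `F_n = ∑_ν c_ν (1 - t_1)^{-(D+1)} t^ν` is a polynomial in `t_2, t_3, …`
over `ℂ(t_1)`. Since every `t_i` has positive weight `i - 1`, `F_n` only involves
`t_2, …, t_{n-2}`, and `t_{n-2}` only through the term `c (1 - t_1)^{-(n-1)} t_{n-2}` with
`c ≠ 0`. Thus `Y_n ↦ F_n` is a triangular change of variables, inverted by solving for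
`t_{n-2}` by well-founded recursion.
-/
open Finsupp MvPolynomial
open scoped Nat LaurentSeries

theorem MvPolynomial.aeval_congr_vars {R S σ : Type*} [CommSemiring R] [CommSemiring S]
    [Algebra R S] {f g : σ → S} {p : MvPolynomial σ R} (h : ∀ i ∈ p.vars, f i = g i) :
    aeval f p = aeval g p :=
  eval₂Hom_congr' rfl (fun i hi _ => h i hi) rfl

section Triangular

variable {R ι : Type*} [CommRing R] [LinearOrder ι] [WellFoundedLT ι]

noncomputable def triangularInv (f : ι → MvPolynomial ι R) (c : ι → R) : ι → MvPolynomial ι R :=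
  wellFounded_lt.fix fun i h =>
    Ring.inverse (c i) • (X i - aeval (fun j => if hj : j < i then h j hj else 0) (f i - c i • X i))

variable {f : ι → MvPolynomial ι R} {c : ι → R}

theorem triangularInv_eq (hf : ∀ i, ∀ j ∈ (f i - c i • X i).vars, j < i) (i : ι) :
    triangularInv f c i =
      Ring.inverse (c i) • (X i - aeval (triangularInv f c) (f i - c i • X i)) := by
  rw [triangularInv, WellFounded.fix_eq]
  congr 2
  exact aeval_congr_vars fun j hj => dif_pos (hf i j hj)

variable (hc : ∀ i, IsUnit (c i)) (hf : ∀ i, ∀ j ∈ (f i - c i • X i).vars, j < i)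
include hc hf

theorem aeval_triangularInv (i : ι) : aeval f (triangularInv f c i) = X i := by
  induction i using WellFoundedLT.induction with
  | ind i ih =>
    have hp : aeval (fun j => aeval f (triangularInv f c j)) (f i - c i • X i) = f i - c i • X i :=
      (aeval_congr_vars fun j hj => ih j (hf i j hj)).trans (aeval_X_left_apply _)
    rw [triangularInv_eq hf, map_smul, map_sub, aeval_X, comp_aeval_apply, hp, sub_sub_cancel,
      smul_smul, Ring.inverse_mul_cancel _ (hc i), one_smul]

theorem aeval_triangularInv_apply (i : ι) : aeval (triangularInv f c) (f i) = X i := by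
  have := triangularInv_eq hf i
  rw [← sub_add_cancel (f i) (c i • X i), map_add, map_smul, aeval_X, this, smul_smul,
    Ring.mul_inverse_cancel _ (hc i), one_smul, add_sub_cancel]

theorem bijective_aeval_of_triangular : Function.Bijective (aeval (R := R) f) := by
  have hleft : (aeval (triangularInv f c)).comp (aeval f) = AlgHom.id R _ :=
    algHom_ext fun i => by
      rw [AlgHom.comp_apply, aeval_X, aeval_triangularInv_apply hc hf, AlgHom.id_apply]
  have hright : (aeval f).comp (aeval (triangularInv f c)) = AlgHom.id R _ :=
    algHom_ext fun i => by
      rw [AlgHom.comp_apply, aeval_X, aeval_triangularInv hc hf, AlgHom.id_apply]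
  exact (AlgEquiv.ofAlgHom _ _ hright hleft).bijective

end Triangular

theorem Finsupp.finite_setOf_weight_eq {σ : Type*} {w : σ → ℕ} (hw : ∀ s, w s ≠ 0) {n : ℕ}
    (hfin : {s | w s ≤ n}.Finite) : {ν : σ →₀ ℕ | weight w ν = n}.Finite := by
  classical
  refine (hfin.toFinset.finsupp fun _ => Finset.range (n + 1)).finite_toSet.subset
    fun ν (hν : weight w ν = n) => ?_
  rw [Finset.mem_coe, Finset.mem_finsupp_iff]
  refine ⟨fun s hs => ?_, fun s _ => ?_⟩
  · exact hfin.mem_toFinset.mpr (hν ▸ le_weight_of_ne_zero' w (mem_support_iff.mp hs))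
  · exact Finset.mem_range_succ_iff.mpr (hν ▸ le_weight w (hw s) ν)

theorem Finsupp.lt_of_mem_support_of_weight_eq {σ : Type*} [LinearOrder σ] {w : σ → ℕ}
    (hw : StrictMono w) (hpos : ∀ s, w s ≠ 0) {ν : σ →₀ ℕ} {i j : σ} (hν : weight w ν = w i)
    (hne : ν ≠ single i 1) (hj : j ∈ ν.support) : j < i := by
  by_contra! hij
  have hj0 : ν j ≠ 0 := mem_support_iff.mp hj
  have hwj : w j = w i := le_antisymm (hν ▸ le_weight_of_ne_zero' w hj0) (hw.monotone hij)
  have hrest : ν - single j 1 = 0 := by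
    by_contra hne0
    obtain ⟨s, hs⟩ := Finsupp.ne_iff.mp hne0
    have h₁ := le_weight_of_ne_zero' w hs
    have h₂ := weight_sub_single_add (w := w) hj0
    have := hpos s
    omega
  exact hne (by rw [← sub_add_single_one_cancel hj0, hrest, zero_add, hw.injective hwj])

theorem RatFunc.coe_C_div_one_sub_X_pow {F : Type*} [Field F] (c : F) (d : ℕ) :
    ((RatFunc.C c / (1 - RatFunc.X) ^ (d + 1) : RatFunc F) : F⸨X⸩) =
      HahnSeries.ofPowerSeries ℤ F (PowerSeries.mk fun a => c * (d + a).choose d) := by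
  have hden : HahnSeries.ofPowerSeries ℤ F ((1 - PowerSeries.X) ^ (d + 1)) ≠ 0 :=
    (map_ne_zero_iff _ HahnSeries.ofPowerSeries_injective).mpr
      (pow_ne_zero _ fun h => by simpa using congrArg PowerSeries.constantCoeff h)
  have hC : ((RatFunc.C c : RatFunc F) : F⸨X⸩) =
      HahnSeries.ofPowerSeries ℤ F (PowerSeries.C c) := by
    rw [← RatFunc.algebraMap_C, ← IsScalarTower.algebraMap_apply,
      Polynomial.algebraMap_hahnSeries_apply]
    simp
  rw [map_div₀, map_pow, map_sub, map_one, RatFunc.coe_X, hC, ← HahnSeries.ofPowerSeries_X,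
    ← map_one (HahnSeries.ofPowerSeries ℤ F), ← map_sub, ← map_pow, div_eq_iff hden, ← map_mul]
  have hmk : (PowerSeries.mk fun a => c * (d + a).choose d : PowerSeries F) =
      PowerSeries.C c * PowerSeries.mk fun a => ((d + a).choose d : F) := by
    ext a; simp [PowerSeries.coeff_C_mul]
  rw [hmk, mul_assoc, PowerSeries.mk_add_choose_mul_one_sub_pow_eq_one, mul_one]

theorem corr_replicate_zero_apply (n : ℕ) (m : ℕ →₀ ℕ) :
    corr (Multiset.replicate n 0) m =
      if weight id m + 3 = n + degree m then
        ((weight id m)! : ℂ) / ((m.prod fun i e => (i ! : ℂ) ^ e) * m.prod fun _ e => (e ! : ℂ))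
      else 0 := by
  have hsum : (Multiset.replicate n 0 + toMultiset m).sum = weight id m := by
    simp [sum_toMultiset, weight_apply]
  have hcard : Multiset.card (Multiset.replicate n 0 + toMultiset m) = n + degree m := by
    simp [card_toMultiset, degree_apply, Finsupp.sum]
  have hprod : ((Multiset.replicate n 0 + toMultiset m).map fun i => (i ! : ℂ)).prod =
      m.prod fun i e => (i ! : ℂ) ^ e := by
    rw [Multiset.map_add, Multiset.prod_add, Multiset.map_replicate, Multiset.prod_replicate,
      toMultiset_map, prod_toMultiset, prod_mapDomain_index (fun _ => pow_zero _)
        (fun _ _ _ => pow_add _ _ _)]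
    simp
  unfold corr tauInt
  rw [hsum, hcard, hprod]
  split_ifs with h
  · rw [show n + degree m - 3 = weight id m by omega, div_div]
  · rw [zero_div]

section Correlator

variable (ν : {i : ℕ // 2 ≤ i} →₀ ℕ)

noncomputable def correlatorConst : ℂ :=
  ((weight Subtype.val ν)! : ℂ) /
    ((ν.prod fun i e => ((i : ℕ)! : ℂ) ^ e) * ν.prod fun _ e => (e ! : ℂ))

theorem weight_val_eq_weight_pred_add_degree :
    weight Subtype.val ν = weight (fun i : {i : ℕ // 2 ≤ i} => (i : ℕ) - 1) ν + degree ν := by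
  simp only [weight_apply, degree_apply, Finsupp.sum, ← Finset.sum_add_distrib, smul_eq_mul]
  refine Finset.sum_congr rfl fun i _ => ?_
  have := i.2
  rw [Nat.mul_sub_one]
  have : ν i ≤ ν i * i := Nat.le_mul_of_pos_right _ (by omega)
  omega

theorem coeff_setT0_corr_replicate_s12 (d a : ℕ) :
    MvPowerSeries.coeff (embDomain (Function.Embedding.subtype fun i => 2 ≤ i) ν + single 1 a)
        (setT0 (corr (Multiset.replicate (d + 3) 0))) =
      if weight (fun i : {i : ℕ // 2 ≤ i} => (i : ℕ) - 1) ν = d then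
        correlatorConst ν * ((weight Subtype.val ν + a).choose (weight Subtype.val ν) : ℂ)
      else 0 := by
  set m := embDomain (Function.Embedding.subtype fun i => 2 ≤ i) ν + single 1 a
  have hm0 : m 0 = 0 := by
    rw [Finsupp.add_apply, embDomain_of_notMem_range, single_eq_of_ne (by norm_num), add_zero]
    rintro ⟨i, hi⟩
    have := i.2
    simp_all
  have hweight : weight id m = weight Subtype.val ν + a := by
    rw [map_add, weight_single, weight_apply, weight_apply, sum_embDomain]
    simp
  have hdegree : degree m = degree ν + a := by
    rw [map_add, degree_single, embDomain_eq_mapDomain, degree_mapDomain]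
  have hdisj : Disjoint (embDomain (Function.Embedding.subtype fun i => 2 ≤ i) ν).support
      (single 1 a).support := by
    rw [support_embDomain, Finset.disjoint_left]
    intro x hx hx1
    obtain ⟨i, -, rfl⟩ := Finset.mem_map.mp hx
    have := i.2
    have := Finset.mem_singleton.mp (support_single_subset hx1)
    simp_all
  have hpowers : (m.prod fun i e => (i ! : ℂ) ^ e) = ν.prod fun i e => ((i : ℕ)! : ℂ) ^ e := by
    rw [prod_add_index' (fun _ => pow_zero _) (fun _ _ _ => pow_add _ _ _), prod_embDomain,
      prod_single_index (by simp)]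
    simp
  have hfactorials : (m.prod fun _ e => (e ! : ℂ)) = (ν.prod fun _ e => (e ! : ℂ)) * a ! := by
    rw [prod_add_index_of_disjoint hdisj, prod_embDomain, prod_single_index (by simp)]
  have hsplit := weight_val_eq_weight_pred_add_degree ν
  rw [MvPowerSeries.coeff_apply, setT0, if_pos hm0, corr_replicate_zero_apply, hweight, hdegree,
    hpowers, hfactorials]
  split_ifs with h₁ h₂ h₂
  · rw [correlatorConst, ← Nat.choose_mul_factorial_mul_factorial (Nat.le_add_right _ a),
      Nat.add_sub_cancel_left]
    push_cast
    rw [← mul_assoc, mul_div_mul_right _ _ (by exact_mod_cast a.factorial_ne_zero)]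
    ring
  · omega
  · omega
  · rfl

noncomputable def correlatorCoeff : RatFunc ℂ :=
  RatFunc.C (correlatorConst ν) / (1 - RatFunc.X) ^ (weight Subtype.val ν + 1)

theorem correlatorCoeff_ne_zero : correlatorCoeff ν ≠ 0 := by
  have hcoeff : correlatorConst ν ≠ 0 := by
    refine div_ne_zero (Nat.cast_ne_zero.mpr (Nat.factorial_ne_zero _)) (mul_ne_zero ?_ ?_) <;>
      exact prod_ne_zero_iff.mpr fun _ _ => by simp [Nat.factorial_ne_zero]
  have hX : (1 - RatFunc.X : RatFunc ℂ) ≠ 0 := by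
    rw [sub_ne_zero]
    intro h
    simpa using congrArg RatFunc.intDegree h
  exact div_ne_zero (by simpa using hcoeff) (pow_ne_zero _ hX)

theorem finite_setOf_weight_pred_eq (d : ℕ) :
    {ν : {i : ℕ // 2 ≤ i} →₀ ℕ | weight (fun i : {i : ℕ // 2 ≤ i} => (i : ℕ) - 1) ν = d}.Finite :=
  Finsupp.finite_setOf_weight_eq (fun i => by have := i.2; omega) <|
    ((Set.finite_Iic (d + 1)).preimage Subtype.val_injective.injOn).subset
      fun i (hi : (i : ℕ) - 1 ≤ d) => by simp only [Set.mem_preimage, Set.mem_Iic]; omega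

end Correlator

/-- `F_{d+3}`, which is weighted homogeneous of degree `d` when `t_i` has weight `i - 1`. -/
noncomputable def correlatorPoly (d : ℕ) : MvPolynomial {i : ℕ // 2 ≤ i} (RatFunc ℂ) :=
  ∑ ν ∈ (finite_setOf_weight_pred_eq d).toFinset, monomial ν (correlatorCoeff ν)

theorem coeff_correlatorPoly (d : ℕ) (ν : {i : ℕ // 2 ≤ i} →₀ ℕ) :
    coeff ν (correlatorPoly d) =
      if weight (fun i : {i : ℕ // 2 ≤ i} => (i : ℕ) - 1) ν = d then correlatorCoeff ν else 0 := by
  rw [correlatorPoly, coeff_sum]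
  simp [coeff_monomial]

theorem coe_coeff_correlatorPoly (d : ℕ) (ν : {i : ℕ // 2 ≤ i} →₀ ℕ) :
    ((coeff ν (correlatorPoly d) : RatFunc ℂ) : LaurentSeries ℂ) =
      HahnSeries.ofPowerSeries ℤ ℂ (PowerSeries.mk fun a =>
        MvPowerSeries.coeff (embDomain (Function.Embedding.subtype fun i => 2 ≤ i) ν + single 1 a)
          (setT0 (corr (Multiset.replicate (d + 3) 0)))) := by
  simp_rw [coeff_correlatorPoly, coeff_setT0_corr_replicate_s12]
  split_ifs
  · rw [correlatorCoeff, RatFunc.coe_C_div_one_sub_X_pow]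
  · rw [map_zero, ← map_zero (HahnSeries.ofPowerSeries ℤ ℂ)]
    rfl

theorem vars_correlatorPoly_sub_lt (i : {i : ℕ // 2 ≤ i}) :
    ∀ j ∈ (correlatorPoly ((i : ℕ) - 1) - correlatorCoeff (single i 1) • X i).vars, j < i := by
  classical
  have hpred : StrictMono fun i : {i : ℕ // 2 ≤ i} => (i : ℕ) - 1 := fun a b hab => by
    have : (a : ℕ) < b := hab
    have := a.2
    dsimp only
    omega
  have hmem : single i 1 ∈ (finite_setOf_weight_pred_eq ((i : ℕ) - 1)).toFinset := by
    simp [weight_single]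
  rw [correlatorPoly, ← Finset.add_sum_erase _ _ hmem, X, smul_monomial, smul_eq_mul, mul_one,
    add_sub_cancel_left]
  intro j hj
  obtain ⟨ν, hν, hjν⟩ := Finset.mem_biUnion.mp (vars_sum_subset _ _ hj)
  rw [vars_monomial (correlatorCoeff_ne_zero ν)] at hjν
  obtain ⟨hne, hν⟩ := Finset.mem_erase.mp hν
  have hw : weight (fun i : {i : ℕ // 2 ≤ i} => (i : ℕ) - 1) ν = (i : ℕ) - 1 :=
    (finite_setOf_weight_pred_eq _).mem_toFinset.mp hν
  exact lt_of_mem_support_of_weight_eq hpred (fun i => by have := i.2; omega) hw hne hjν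

def addTwoEquiv : {i : ℕ // 2 ≤ i} ≃ {n : ℕ // 4 ≤ n} where
  toFun i := ⟨i + 2, Nat.add_le_add_right i.2 2⟩
  invFun n := ⟨n - 2, Nat.le_sub_of_add_le n.2⟩
  left_inv i := Subtype.ext (Nat.add_sub_cancel _ _)
  right_inv n := Subtype.ext (Nat.sub_add_cancel (le_trans (by norm_num) n.2))

/-- The correlators `F_n = ⟨⟨1,…,1⟩⟩_{0,n}|_{t_0=0}` (n ≥ 4) freely generate
`ℂ(t_1)[t_2,t_3,…]` over `ℂ(t_1)`: there are polynomials
`G n ∈ ℂ(t_1)[t_2,t_3,…]` representing the `F_n` (coefficientwise, via Laurent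
expansion of rational functions in `t_1`), and the `ℂ(t_1)`-algebra map from
`ℂ(t_1)[Y_4,Y_5,…]` sending `Y_n ↦ G n` is an isomorphism. -/
theorem stmt_12 :
    ∃ G : ℕ → MvPolynomial {i : ℕ // 2 ≤ i} (RatFunc ℂ),
      (∀ n, 4 ≤ n → ∀ ν : {i : ℕ // 2 ≤ i} →₀ ℕ,
        @algebraMap (RatFunc ℂ) (LaurentSeries ℂ) _ _ (RatFunc.liftAlgebra ℂ (LaurentSeries ℂ)) (MvPolynomial.coeff ν (G n)) =
          HahnSeries.ofPowerSeries ℤ ℂ (PowerSeries.mk fun a =>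
            MvPowerSeries.coeff
              (Finsupp.embDomain (Function.Embedding.subtype fun i => 2 ≤ i) ν
                + Finsupp.single 1 a)
              (setT0 (corr (Multiset.replicate n 0))))) ∧
      Function.Bijective
        ⇑(MvPolynomial.aeval (fun p : {n : ℕ // 4 ≤ n} => G p.1) :
          MvPolynomial {n : ℕ // 4 ≤ n} (RatFunc ℂ) →ₐ[RatFunc ℂ]
            MvPolynomial {i : ℕ // 2 ≤ i} (RatFunc ℂ)) := by
  refine ⟨fun n => correlatorPoly (n - 3), fun n hn ν => ?_, ?_⟩
  · obtain ⟨d, rfl⟩ : ∃ d, n = d + 3 := ⟨n - 3, by omega⟩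
    exact coe_coeff_correlatorPoly d ν
  · have hcomp : ⇑(aeval fun p : {n : ℕ // 4 ≤ n} => correlatorPoly (p.1 - 3)) ∘
        ⇑(renameEquiv (RatFunc ℂ) addTwoEquiv) =
          aeval fun i : {i : ℕ // 2 ≤ i} => correlatorPoly ((i : ℕ) - 1) :=
      -- `i + 2 - 3` and `i - 1` agree definitionally
      _root_.funext fun p => aeval_rename (R := RatFunc ℂ) addTwoEquiv _ p
    rw [← Function.Bijective.of_comp_iff _ (renameEquiv (RatFunc ℂ) addTwoEquiv).bijective, hcomp]
    exact bijective_aeval_of_triangular (fun i => (correlatorCoeff_ne_zero (single i 1)).isUnit)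
      vars_correlatorPoly_sub_lt
end
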